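/- Simultaneous regularity for a partition: Let α, ε ∈ (0,1) and m a positive integer. There exists σ = σ(ε,α,m) > 0 such that if R ⊆ V = F_p^n is σ-regular, A ⊆ R has |A| = α|R|, and A = A_1 ∪ ... ∪ A_m is a partition into m sets each of size |A|/m, then there exists a subspace H ≤ V of index at most W(4m^2 ε^{-3} α^{-2}) which is ε-regular for every A_i simultaneously. -/

import Mathlib

open Finset

/-- `e(z) = e^{2πiz}`. -/
noncomputable def eC (z : ℝ) : ℂ := Complex.exp (2 * Real.pi * Complex.I * z)

/-- `⟨x,ξ⟩ = (Σ_i x_i ξ_i)/p` as a real number. -/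
noncomputable def bracket (p n : ℕ) (x ξ : Fin n → ZMod p) : ℝ :=
  ((∑ i, x i * ξ i : ZMod p).val : ℝ) / p

/-- Fourier transform over `V = F_p^n`: `f̂(ξ) = E_{x∈V} f(x) e(-⟨x,ξ⟩)`. -/
noncomputable def ft (p n : ℕ) [NeZero p] (f : (Fin n → ZMod p) → ℂ) (ξ : Fin n → ZMod p) : ℂ :=
  (Fintype.card (Fin n → ZMod p) : ℂ)⁻¹ * ∑ x, f x * eC (-(bracket p n x ξ))

open Classical in
/-- Fourier transform with respect to a subspace `H`:
`f̂(ξ) = E_{x∈H} f(x) e(-⟨x,ξ⟩)`. -/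
noncomputable def ftH (p n : ℕ) [NeZero p] (H : Submodule (ZMod p) (Fin n → ZMod p))
    (f : (Fin n → ZMod p) → ℂ) (ξ : Fin n → ZMod p) : ℂ :=
  (Nat.card H : ℂ)⁻¹ * ∑ x ∈ Finset.univ.filter (· ∈ H), f x * eC (-(bracket p n x ξ))

open Classical in
/-- The indicator function of `A_H^v = (A+v) ∩ H` (as a function on `V`, supported on `H`). -/
noncomputable def indAH (p n : ℕ) (A : Set (Fin n → ZMod p))
    (H : Submodule (ZMod p) (Fin n → ZMod p)) (v x : Fin n → ZMod p) : ℂ :=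
  if x ∈ H ∧ x - v ∈ A then 1 else 0

open Classical in
/-- `|A_H^v|`, the cardinality of `(A+v) ∩ H`. -/
noncomputable def cardAH (p n : ℕ) [NeZero p] (A : Set (Fin n → ZMod p))
    (H : Submodule (ZMod p) (Fin n → ZMod p)) (v : Fin n → ZMod p) : ℕ :=
  (Finset.univ.filter (fun x => x ∈ H ∧ x - v ∈ A)).card
/-- `v` is an ε-regular vector for `A` with respect to `H`:
`sup_{ξ∉H^⊥} |Â_H^v(ξ)| ≤ ε|A|/N`. -/
def regVec (p n : ℕ) [NeZero p] (ε : ℝ) (A : Finset (Fin n → ZMod p))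
    (H : Submodule (ZMod p) (Fin n → ZMod p)) (v : Fin n → ZMod p) : Prop :=
  ∀ ξ : Fin n → ZMod p, ¬ (∀ h ∈ H, (∑ i, h i * ξ i : ZMod p) = 0) →
    ‖ftH p n H (indAH p n (↑A) H v) ξ‖ ≤ ε * A.card / (Fintype.card (Fin n → ZMod p) : ℝ)

/-- The normalized mean-square density
`d(A,H) = (1/N) Σ_{v∈V} (|A_H^v|/|H|)² / (|A|/N)²`. -/
noncomputable def dens (p n : ℕ) [NeZero p] (A : Finset (Fin n → ZMod p))
    (H : Submodule (ZMod p) (Fin n → ZMod p)) : ℝ :=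
  (Fintype.card (Fin n → ZMod p) : ℝ)⁻¹ *
    ∑ v : Fin n → ZMod p,
      ((cardAH p n (↑A) H v : ℝ) / (Nat.card H : ℝ)) ^ 2
        / ((A.card : ℝ) / (Fintype.card (Fin n → ZMod p) : ℝ)) ^ 2

/-- The tower function `W(1) = 2p`, `W(t+1) = (2p)^{W(t)}` (indexed from 0 here,
so `tower p 0 = 2p` plays the role of `W(1)`). -/
def tower (p : ℕ) : ℕ → ℕ
  | 0 => 2 * p
  | t + 1 => (2 * p) ^ tower p t

/-!
Energy increment. Let `d(A, H)` be the mean square of the densities of `A` on the cosets of `H`,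
normalised by `(|A|/N)²`; by Cauchy–Schwarz it can only grow when `H` is refined. If more than
`εN` vectors are irregular for some `Aᵢ`, choose for each coset of `H` one frequency `ξ ∉ H^⊥`
with a large Fourier coefficient and intersect `H` with the kernels of these at most `[V : H]`
functionals. The new index is at most `p^[V:H] · [V:H] ≤ (2p)^[V:H]`, and Bessel's inequality on
each cell, split into the `p` fibres of `ξ`, makes `d(Aᵢ, ·)` grow by `ε³`. Starting from
`Σᵢ d(Aᵢ, V) = m`, after `T = ⌈4m²ε⁻³α⁻²⌉` increments the sum would exceed `4m²/α²`, whereas for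
every subspace of index at most `W(T)` the `1/W(T)`-regularity of `R ⊇ A` bounds it by `4m²/α²`.
-/

section Characters

variable {p n : ℕ}

def pairing (ξ : Fin n → ZMod p) : (Fin n → ZMod p) →ₗ[ZMod p] ZMod p where
  toFun x := ∑ i, x i * ξ i
  map_add' x y := by simp [add_mul, sum_add_distrib]
  map_smul' c x := by simp [mul_sum, mul_assoc]

lemma pairing_apply (ξ x : Fin n → ZMod p) : pairing ξ x = ∑ i, x i * ξ i := rfl

variable [NeZero p]

lemma eC_neg_bracket (x ξ : Fin n → ZMod p) :
    eC (-bracket p n x ξ) = ZMod.stdAddChar (-pairing ξ x) := by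
  rw [AddChar.map_neg_eq_inv, ZMod.stdAddChar_apply, ZMod.toCircle_apply, eC, bracket,
    ← Complex.exp_neg, pairing_apply]
  congr 1
  push_cast
  ring

lemma norm_eC_neg_bracket (x ξ : Fin n → ZMod p) : ‖eC (-bracket p n x ξ)‖ = 1 := by
  rw [eC_neg_bracket, ZMod.stdAddChar_apply, Circle.norm_coe]

lemma eC_neg_bracket_add (x y ξ : Fin n → ZMod p) :
    eC (-bracket p n (x + y) ξ) = eC (-bracket p n x ξ) * eC (-bracket p n y ξ) := by
  simp only [eC_neg_bracket, map_add, neg_add, AddChar.map_add_eq_mul]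

lemma sum_stdAddChar_neg (hp : 1 < p) : ∑ j : ZMod p, ZMod.stdAddChar (-j) = 0 := by
  have : Fact (1 < p) := ⟨hp⟩
  rw [Fintype.sum_equiv (Equiv.neg (ZMod p)) (fun j => ZMod.stdAddChar (-j)) ZMod.stdAddChar
    fun _ => rfl]
  refine AddChar.sum_eq_zero_of_ne_one fun h => one_ne_zero (ZMod.injective_stdAddChar (N := p) ?_)
  simp [h]

end Characters

lemma norm_sum_mul_sq_add_sq_sum_le {ι : Type*} [Fintype ι] [Nonempty ι] (a : ι → ℝ)
    (w : ι → ℂ) (hw : ∀ i, ‖w i‖ ≤ 1) (hw₀ : ∑ i, w i = 0) :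
    ‖∑ i, (a i : ℂ) * w i‖ ^ 2 + (∑ i, a i) ^ 2 ≤ Fintype.card ι * ∑ i, a i ^ 2 := by
  set c := (∑ i, a i) / Fintype.card ι
  have hcard : (Fintype.card ι : ℝ) ≠ 0 := by positivity
  have hrecenter : ∑ i, (a i : ℂ) * w i = ∑ i, ((a i - c : ℝ) : ℂ) * w i := by
    simp [sub_mul, sum_sub_distrib, ← mul_sum, hw₀]
  have hnorm : ‖∑ i, (a i : ℂ) * w i‖ ≤ ∑ i, |a i - c| := by
    rw [hrecenter]
    refine (norm_sum_le _ _).trans (sum_le_sum fun i _ => ?_)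
    rw [norm_mul, Complex.norm_real, Real.norm_eq_abs]
    exact mul_le_of_le_one_right (abs_nonneg _) (hw i)
  have hvariance : Fintype.card ι * ∑ i, (a i - c) ^ 2
      = Fintype.card ι * ∑ i, a i ^ 2 - (∑ i, a i) ^ 2 := by
    simp only [sub_sq, sum_add_distrib, sum_sub_distrib, ← sum_mul, ← mul_sum, sum_const,
      card_univ, nsmul_eq_mul, c]
    field_simp
    ring
  calc ‖∑ i, (a i : ℂ) * w i‖ ^ 2 + (∑ i, a i) ^ 2
      ≤ (∑ i, |a i - c|) ^ 2 + (∑ i, a i) ^ 2 := by gcongr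
    _ ≤ Fintype.card ι * ∑ i, |a i - c| ^ 2 + (∑ i, a i) ^ 2 := by
        gcongr; exact sq_sum_le_card_mul_sum_sq
    _ = Fintype.card ι * ∑ i, a i ^ 2 := by simp only [sq_abs, hvariance]; ring

open Classical

section Cells

variable {p n : ℕ} [NeZero p] {H H' H'' : Submodule (ZMod p) (Fin n → ZMod p)}

noncomputable def finsetOf (H : Submodule (ZMod p) (Fin n → ZMod p)) : Finset (Fin n → ZMod p) :=
  univ.filter (· ∈ H)

@[simp]
lemma mem_finsetOf {x : Fin n → ZMod p} : x ∈ finsetOf H ↔ x ∈ H := by simp [finsetOf]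

lemma card_finsetOf (H : Submodule (ZMod p) (Fin n → ZMod p)) : #(finsetOf H) = Nat.card H := by
  rw [Nat.card_eq_fintype_card, finsetOf, Fintype.card_subtype]

lemma finsetOf_top : finsetOf (⊤ : Submodule (ZMod p) (Fin n → ZMod p)) = univ := by
  ext; simp

lemma sum_finsetOf_add_mem {M : Type*} [AddCommMonoid M] (g : (Fin n → ZMod p) → M)
    {k : Fin n → ZMod p} (hk : k ∈ H) : ∑ h ∈ finsetOf H, g (h + k) = ∑ h ∈ finsetOf H, g h :=
  sum_nbij' (· + k) (· - k) (fun _ hh => mem_finsetOf.2 (H.add_mem (mem_finsetOf.1 hh) hk))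
    (fun _ hh => mem_finsetOf.2 (H.sub_mem (mem_finsetOf.1 hh) hk)) (by simp) (by simp)
    (fun _ _ => rfl)

lemma sum_finsetOf_sub_mem {M : Type*} [AddCommMonoid M] (g : (Fin n → ZMod p) → M)
    {x : Fin n → ZMod p} (hx : x ∈ H) : ∑ h ∈ finsetOf H, g (x - h) = ∑ h ∈ finsetOf H, g h :=
  sum_nbij' (x - ·) (x - ·) (fun _ hh => mem_finsetOf.2 (H.sub_mem hx (mem_finsetOf.1 hh)))
    (fun _ hh => mem_finsetOf.2 (H.sub_mem hx (mem_finsetOf.1 hh))) (by simp) (by simp)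
    (fun _ _ => rfl)

lemma sum_sum_finsetOf_add {M : Type*} [AddCommMonoid M] (g : (Fin n → ZMod p) → M) :
    ∑ v, ∑ h ∈ finsetOf H, g (v + h) = Nat.card H • ∑ v, g v := by
  rw [sum_comm, ← card_finsetOf, ← sum_const]
  exact sum_congr rfl fun h _ => Fintype.sum_equiv (Equiv.addRight h) _ _ fun _ => rfl

lemma cardAH_eq_sum (A : Set (Fin n → ZMod p)) (H : Submodule (ZMod p) (Fin n → ZMod p))
    (v : Fin n → ZMod p) :
    (cardAH p n A H v : ℝ) = ∑ x ∈ finsetOf H, if x - v ∈ A then 1 else 0 := by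
  rw [cardAH, ← filter_filter, card_filter]
  push_cast
  rfl

lemma sum_cardAH_of_le (hle : H' ≤ H) (A : Set (Fin n → ZMod p)) (v : Fin n → ZMod p) :
    ∑ h ∈ finsetOf H, (cardAH p n A H' (v + h) : ℝ) = Nat.card H' * cardAH p n A H v := by
  simp only [cardAH_eq_sum]
  rw [sum_comm, ← card_finsetOf, ← nsmul_eq_mul, ← sum_const]
  refine sum_congr rfl fun x hx => ?_
  have hxH : x ∈ H := hle (mem_finsetOf.1 hx)
  simpa only [sub_add_eq_sub_sub_swap] using
    sum_finsetOf_sub_mem (fun y => if y - v ∈ A then (1 : ℝ) else 0) hxH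

-- `cardAH p n A H v = |A ∩ (H - v)|`, so this is the density of `A` on the coset `H - v`.
noncomputable def cellDensity (A : Set (Fin n → ZMod p)) (H : Submodule (ZMod p) (Fin n → ZMod p))
    (v : Fin n → ZMod p) : ℝ :=
  cardAH p n A H v / Nat.card H

noncomputable def energy (A : Set (Fin n → ZMod p)) (H : Submodule (ZMod p) (Fin n → ZMod p)) :
    ℝ :=
  (Fintype.card (Fin n → ZMod p) : ℝ)⁻¹ * ∑ v, cellDensity A H v ^ 2

lemma sum_cellDensity_of_le (hle : H' ≤ H) (A : Set (Fin n → ZMod p)) (v : Fin n → ZMod p) :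
    ∑ h ∈ finsetOf H, cellDensity A H' (v + h) = Nat.card H * cellDensity A H v := by
  have : (Nat.card H' : ℝ) ≠ 0 := by exact_mod_cast Nat.card_pos.ne'
  simp only [cellDensity, ← sum_div, sum_cardAH_of_le hle]
  field_simp

lemma sq_cellDensity_mul_card_le (hle : H' ≤ H) (A : Set (Fin n → ZMod p))
    (v : Fin n → ZMod p) :
    cellDensity A H v ^ 2 * Nat.card H ≤ ∑ h ∈ finsetOf H, cellDensity A H' (v + h) ^ 2 := by
  have hcs := sq_sum_le_card_mul_sum_sq (s := finsetOf H) (f := fun h => cellDensity A H' (v + h))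
  rw [sum_cellDensity_of_le hle, card_finsetOf] at hcs
  have : (0 : ℝ) < Nat.card H := by exact_mod_cast Nat.card_pos
  nlinarith

lemma sum_sq_cellDensity_mono (h₁ : H'' ≤ H') (h₂ : H' ≤ H) (A : Set (Fin n → ZMod p))
    (v : Fin n → ZMod p) :
    ∑ h ∈ finsetOf H, cellDensity A H' (v + h) ^ 2
      ≤ ∑ h ∈ finsetOf H, cellDensity A H'' (v + h) ^ 2 := by
  have hpos : (0 : ℝ) < Nat.card H' := by exact_mod_cast Nat.card_pos
  refine le_of_mul_le_mul_right ?_ hpos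
  rw [sum_mul]
  calc ∑ h ∈ finsetOf H, cellDensity A H' (v + h) ^ 2 * Nat.card H'
      ≤ ∑ h ∈ finsetOf H, ∑ k ∈ finsetOf H', cellDensity A H'' (v + h + k) ^ 2 :=
        sum_le_sum fun h _ => sq_cellDensity_mul_card_le h₁ A (v + h)
    _ = ∑ k ∈ finsetOf H', ∑ h ∈ finsetOf H, cellDensity A H'' (v + (h + k)) ^ 2 := by
        rw [sum_comm]; simp only [add_assoc]
    _ = (∑ h ∈ finsetOf H, cellDensity A H'' (v + h) ^ 2) * Nat.card H' := by
        rw [sum_congr rfl fun k hk =>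
            sum_finsetOf_add_mem (fun h => cellDensity A H'' (v + h) ^ 2) (h₂ (mem_finsetOf.1 hk)),
          sum_const, card_finsetOf, nsmul_eq_mul, mul_comm]

lemma energy_mono (hle : H' ≤ H) (A : Set (Fin n → ZMod p)) : energy A H ≤ energy A H' := by
  have key := sum_sq_cellDensity_mono hle le_top A 0
  simp only [finsetOf_top, zero_add] at key
  exact mul_le_mul_of_nonneg_left key (by positivity)

lemma dens_eq_energy (A : Finset (Fin n → ZMod p)) (H : Submodule (ZMod p) (Fin n → ZMod p)) :
    dens p n A H = energy A H / (#A / Fintype.card (Fin n → ZMod p) : ℝ) ^ 2 := by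
  rw [_root_.dens, energy, mul_div_assoc, sum_div]
  rfl

lemma dens_mono (hle : H' ≤ H) (A : Finset (Fin n → ZMod p)) : dens p n A H ≤ dens p n A H' := by
  rw [dens_eq_energy, dens_eq_energy]
  exact div_le_div_of_nonneg_right (energy_mono hle A) (by positivity)

end Cells

section Fibers

variable {p n : ℕ} {H : Submodule (ZMod p) (Fin n → ZMod p)} {ξ : Fin n → ZMod p}

lemma exists_mem_pairing_eq (hp : p.Prime) (hξ : ¬ H ≤ LinearMap.ker (pairing ξ)) (j : ZMod p) :
    ∃ x ∈ H, pairing ξ x = j := by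
  have : Fact p.Prime := ⟨hp⟩
  obtain ⟨h, hh, hker⟩ := SetLike.not_le_iff_exists.1 hξ
  rw [LinearMap.mem_ker] at hker
  exact ⟨(j * (pairing ξ h)⁻¹) • h, H.smul_mem _ hh, by
    rw [map_smul, smul_eq_mul, mul_assoc, inv_mul_cancel₀ hker, mul_one]⟩

variable [NeZero p]

lemma card_pairing_fiber (hp : p.Prime) (hξ : ¬ H ≤ LinearMap.ker (pairing ξ)) (j : ZMod p) :
    #((finsetOf H).filter (pairing ξ · = j)) = Nat.card ↥(H ⊓ LinearMap.ker (pairing ξ)) := by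
  obtain ⟨x, hx, hxj⟩ := exists_mem_pairing_eq hp hξ j
  rw [← card_finsetOf]
  refine card_nbij' (· - x) (· + x) (fun y hy => ?_) (fun y hy => ?_)
    (fun y _ => sub_add_cancel y x) (fun y _ => add_sub_cancel_right y x)
  · rw [mem_coe, mem_filter, mem_finsetOf] at hy
    rw [mem_coe, mem_finsetOf, Submodule.mem_inf, LinearMap.mem_ker, map_sub, hy.2, hxj, sub_self]
    exact ⟨H.sub_mem hy.1 hx, rfl⟩
  · rw [mem_coe, mem_finsetOf, Submodule.mem_inf, LinearMap.mem_ker] at hy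
    rw [mem_coe, mem_filter, mem_finsetOf, map_add, hy.2, hxj, zero_add]
    exact ⟨H.add_mem hy.1 hx, rfl⟩

lemma sum_finsetOf_comp_pairing (hp : p.Prime) (hξ : ¬ H ≤ LinearMap.ker (pairing ξ))
    {M : Type*} [AddCommMonoid M] (g : ZMod p → M) :
    ∑ h ∈ finsetOf H, g (pairing ξ h)
      = Nat.card ↥(H ⊓ LinearMap.ker (pairing ξ)) • ∑ j, g j := by
  rw [← sum_fiberwise' (finsetOf H) (pairing ξ), smul_sum]
  simp only [sum_const, card_pairing_fiber hp hξ]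

lemma card_eq_card_inf_ker (hp : p.Prime) (hξ : ¬ H ≤ LinearMap.ker (pairing ξ)) :
    Nat.card H = p * Nat.card ↥(H ⊓ LinearMap.ker (pairing ξ)) := by
  have := sum_finsetOf_comp_pairing hp hξ fun _ => 1
  simp only [sum_const, card_finsetOf, card_univ, ZMod.card, smul_eq_mul, mul_one] at this
  rw [this, mul_comm]

lemma card_le_card_inf_ker (hp : p.Prime) (H : Submodule (ZMod p) (Fin n → ZMod p))
    (ξ : Fin n → ZMod p) : Nat.card H ≤ p * Nat.card ↥(H ⊓ LinearMap.ker (pairing ξ)) := by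
  by_cases hξ : H ≤ LinearMap.ker (pairing ξ)
  · rw [inf_eq_left.2 hξ]
    exact Nat.le_mul_of_pos_left _ hp.pos
  · exact (card_eq_card_inf_ker hp hξ).le

lemma card_le_pow_mul_card_inf (hp : p.Prime) (H : Submodule (ZMod p) (Fin n → ZMod p))
    (S : Finset (Fin n → ZMod p)) :
    Nat.card H ≤ p ^ #S * Nat.card ↥(H ⊓ S.inf fun ξ => LinearMap.ker (pairing ξ)) := by
  induction S using Finset.induction_on with
  | empty => simp
  | insert ξ S hξS ih =>
    rw [card_insert_of_notMem hξS, inf_insert, inf_left_comm, inf_comm (LinearMap.ker _),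
      pow_succ, mul_assoc]
    exact ih.trans (Nat.mul_le_mul_left _ (card_le_card_inf_ker hp _ ξ))

lemma card_quotient_inf_le (hp : p.Prime) (H : Submodule (ZMod p) (Fin n → ZMod p))
    (S : Finset (Fin n → ZMod p)) :
    Nat.card ((Fin n → ZMod p) ⧸ (H ⊓ S.inf fun ξ => LinearMap.ker (pairing ξ)))
      ≤ p ^ #S * Nat.card ((Fin n → ZMod p) ⧸ H) := by
  set K := H ⊓ S.inf fun ξ => LinearMap.ker (pairing ξ)
  have hK : 0 < Nat.card K := Nat.card_pos
  refine Nat.le_of_mul_le_mul_left ?_ hK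
  calc Nat.card K * Nat.card ((Fin n → ZMod p) ⧸ K)
      = Nat.card H * Nat.card ((Fin n → ZMod p) ⧸ H) := by
        rw [← Submodule.card_eq_card_quotient_mul_card,
          ← Submodule.card_eq_card_quotient_mul_card]
    _ ≤ p ^ #S * Nat.card K * Nat.card ((Fin n → ZMod p) ⧸ H) :=
        Nat.mul_le_mul_right _ (card_le_pow_mul_card_inf hp H S)
    _ = Nat.card K * (p ^ #S * Nat.card ((Fin n → ZMod p) ⧸ H)) := by ring

end Fibers

section FourierStep

variable {p n : ℕ} [NeZero p] {H : Submodule (ZMod p) (Fin n → ZMod p)}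

noncomputable def fiberCount (A : Set (Fin n → ZMod p)) (H : Submodule (ZMod p) (Fin n → ZMod p))
    (v ξ : Fin n → ZMod p) (j : ZMod p) : ℕ :=
  #((univ.filter fun x => x ∈ H ∧ x - v ∈ A).filter (pairing ξ · = j))

lemma sum_fiberCount (A : Set (Fin n → ZMod p)) (v ξ : Fin n → ZMod p) :
    ∑ j, fiberCount A H v ξ j = cardAH p n A H v :=
  (card_eq_sum_card_fiberwise fun _ _ => mem_univ _).symm

lemma ftH_indAH_eq_sum (A : Set (Fin n → ZMod p)) (v ξ : Fin n → ZMod p) :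
    ftH p n H (indAH p n A H v) ξ
      = (Nat.card H : ℂ)⁻¹ * ∑ j, (fiberCount A H v ξ j : ℂ) * ZMod.stdAddChar (-j) := by
  simp only [ftH, indAH, ite_mul, one_mul, zero_mul, ← sum_filter, filter_filter, and_self_left,
    eC_neg_bracket]
  rw [← sum_fiberwise' _ (pairing ξ) fun j => ZMod.stdAddChar (-j)]
  simp only [sum_const, nsmul_eq_mul, fiberCount, filter_filter]

lemma cardAH_inf_ker_add (A : Set (Fin n → ZMod p)) (v ξ : Fin n → ZMod p)
    {h : Fin n → ZMod p} (hh : h ∈ H) :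
    cardAH p n A (H ⊓ LinearMap.ker (pairing ξ)) (v + h) = fiberCount A H v ξ (-pairing ξ h) := by
  refine card_nbij' (· - h) (· + h) (fun x hx => ?_) (fun y hy => ?_)
    (fun x _ => sub_add_cancel x h) (fun y _ => add_sub_cancel_right y h)
  · simp only [mem_coe, mem_filter, mem_univ, true_and, Submodule.mem_inf,
      LinearMap.mem_ker] at hx ⊢
    refine ⟨⟨H.sub_mem hx.1.1 hh, ?_⟩, ?_⟩
    · rw [sub_sub, add_comm]; exact hx.2
    · rw [map_sub, hx.1.2, zero_sub]
  · simp only [mem_coe, mem_filter, mem_univ, true_and, Submodule.mem_inf,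
      LinearMap.mem_ker] at hy ⊢
    refine ⟨⟨H.add_mem hy.1.1 hh, ?_⟩, ?_⟩
    · rw [map_add, hy.2, neg_add_cancel]
    · rw [add_sub_add_right_eq_sub]; exact hy.1.2

/- The fibres of `pairing ξ` split the cell `H - v` into `p` cells of `H ⊓ ker (pairing ξ)`;
Bessel's inequality for the characters `1` and `j ↦ e(-j/p)` of `ZMod p` bounds the gain. -/
lemma sq_cellDensity_add_sq_norm_ftH_le (hp : p.Prime) (A : Set (Fin n → ZMod p))
    (v ξ : Fin n → ZMod p) (hξ : ¬ H ≤ LinearMap.ker (pairing ξ)) :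
    (cellDensity A H v ^ 2 + ‖ftH p n H (indAH p n A H v) ξ‖ ^ 2) * Nat.card H
      ≤ ∑ h ∈ finsetOf H, cellDensity A (H ⊓ LinearMap.ker (pairing ξ)) (v + h) ^ 2 := by
  set K := H ⊓ LinearMap.ker (pairing ξ)
  set a : ZMod p → ℝ := fun j => fiberCount A H v ξ j
  have hK : (0 : ℝ) < Nat.card K := by exact_mod_cast Nat.card_pos
  have hH : (Nat.card H : ℝ) = p * Nat.card K := by exact_mod_cast card_eq_card_inf_ker hp hξ
  have hp₀ : (0 : ℝ) < p := by exact_mod_cast hp.pos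
  have hsubcells : ∑ h ∈ finsetOf H, cellDensity A K (v + h) ^ 2
      = (∑ j, a j ^ 2) / Nat.card K := by
    calc _ = ∑ h ∈ finsetOf H, (a (-pairing ξ h) / Nat.card K) ^ 2 :=
          sum_congr rfl fun h hh => by
            rw [cellDensity, cardAH_inf_ker_add A v ξ (mem_finsetOf.1 hh)]
      _ = Nat.card K • ∑ j, (a (-j) / Nat.card K) ^ 2 :=
          sum_finsetOf_comp_pairing hp hξ fun j => (a (-j) / Nat.card K) ^ 2
      _ = Nat.card K • ∑ j, (a j / Nat.card K) ^ 2 := by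
          rw [Fintype.sum_equiv (Equiv.neg _) (fun j => (a (-j) / Nat.card K) ^ 2)
            (fun j => (a j / Nat.card K) ^ 2) fun _ => rfl]
      _ = _ := by
          rw [nsmul_eq_mul]
          simp only [div_pow, ← sum_div]
          field_simp
  have hcell : cellDensity A H v = (∑ j, a j) / Nat.card H := by
    simp only [cellDensity, a, ← Nat.cast_sum, sum_fiberCount]
  have hft : ‖ftH p n H (indAH p n A H v) ξ‖
      = ‖∑ j, (a j : ℂ) * ZMod.stdAddChar (-j)‖ / Nat.card H := by
    rw [ftH_indAH_eq_sum, norm_mul, norm_inv, Complex.norm_natCast, inv_mul_eq_div]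
    simp only [a, Complex.ofReal_natCast]
  have hbessel := norm_sum_mul_sq_add_sq_sum_le a (fun j => ZMod.stdAddChar (-j))
    (fun j => by rw [ZMod.stdAddChar_apply, Circle.norm_coe]) (sum_stdAddChar_neg hp.one_lt)
  rw [ZMod.card] at hbessel
  rw [hsubcells, hcell, hft, hH]
  calc _ = (‖∑ j, (a j : ℂ) * ZMod.stdAddChar (-j)‖ ^ 2 + (∑ j, a j) ^ 2) / (p * Nat.card K) := by
        field_simp
        ring
    _ ≤ (p * ∑ j, a j ^ 2) / (p * Nat.card K) := by gcongr
    _ = (∑ j, a j ^ 2) / Nat.card K := by field_simp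

end FourierStep

section Witnesses

variable {p n : ℕ} {H : Submodule (ZMod p) (Fin n → ZMod p)}

lemma indAH_add_add (A : Set (Fin n → ZMod p)) {v h : Fin n → ZMod p} (hh : h ∈ H)
    (x : Fin n → ZMod p) : indAH p n A H (v + h) (x + h) = indAH p n A H v x := by
  simp only [indAH, add_sub_add_right_eq_sub, H.add_mem_iff_left hh]

variable [NeZero p]

lemma norm_ftH_indAH_add_mem (A : Set (Fin n → ZMod p)) (ξ : Fin n → ZMod p)
    {v h : Fin n → ZMod p} (hh : h ∈ H) :
    ‖ftH p n H (indAH p n A H (v + h)) ξ‖ = ‖ftH p n H (indAH p n A H v) ξ‖ := by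
  have hshift := sum_finsetOf_add_mem
    (fun x => indAH p n A H (v + h) x * eC (-bracket p n x ξ)) hh
  simp only [indAH_add_add A hh, eC_neg_bracket_add, ← mul_assoc, ← sum_mul] at hshift
  rw [ftH, ftH, ← finsetOf, ← hshift, norm_mul, norm_mul, norm_mul, norm_eC_neg_bracket, mul_one]

lemma regVec_add_mem (ε : ℝ) (A : Finset (Fin n → ZMod p)) {v h : Fin n → ZMod p}
    (hh : h ∈ H) : regVec p n ε A H (v + h) ↔ regVec p n ε A H v := by
  simp only [regVec, norm_ftH_indAH_add_mem _ _ hh]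

-- One frequency per coset of `H` witnesses the irregularity of every vector of that coset.
lemma exists_witnesses (ε : ℝ) (A : Finset (Fin n → ZMod p))
    (H : Submodule (ZMod p) (Fin n → ZMod p)) :
    ∃ S : Finset (Fin n → ZMod p), #S ≤ Nat.card ((Fin n → ZMod p) ⧸ H) ∧
      ∀ v, ¬ regVec p n ε A H v → ∃ ξ ∈ S, ¬ H ≤ LinearMap.ker (pairing ξ) ∧
        ε * #A / Fintype.card (Fin n → ZMod p) < ‖ftH p n H (indAH p n A H v) ξ‖ := by
  have hchoice : ∀ q : (Fin n → ZMod p) ⧸ H, ∃ ξ, ¬ regVec p n ε A H q.out →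
      ¬ H ≤ LinearMap.ker (pairing ξ) ∧
        ε * #A / Fintype.card (Fin n → ZMod p) < ‖ftH p n H (indAH p n A H q.out) ξ‖ := by
    intro q
    by_cases hq : regVec p n ε A H q.out
    · exact ⟨0, fun h => absurd hq h⟩
    · rw [regVec, not_forall] at hq
      obtain ⟨ξ, hξ⟩ := hq
      rw [Classical.not_imp, not_le] at hξ
      exact ⟨ξ, fun _ => hξ⟩
  choose ξ hξ using hchoice
  have : Fintype ((Fin n → ZMod p) ⧸ H) := Fintype.ofFinite _
  refine ⟨univ.image ξ, card_image_le.trans (Nat.card_eq_fintype_card (α := _ ⧸ H)).ge,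
    fun v hv => ⟨ξ (Submodule.Quotient.mk v), mem_image_of_mem _ (mem_univ _), ?_⟩⟩
  have hout : (Submodule.Quotient.mk v : (Fin n → ZMod p) ⧸ H).out = v + (_ - v) :=
    (add_sub_cancel v _).symm
  have hmem : (Submodule.Quotient.mk v : (Fin n → ZMod p) ⧸ H).out - v ∈ H :=
    (Submodule.Quotient.eq H).1 (Quotient.out_eq _)
  have := hξ (Submodule.Quotient.mk v) (by rwa [hout, regVec_add_mem ε A hmem])
  rwa [hout, norm_ftH_indAH_add_mem _ _ hmem] at this

lemma regVec_empty (ε : ℝ) (H : Submodule (ZMod p) (Fin n → ZMod p)) (v : Fin n → ZMod p) :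
    regVec p n ε ∅ H v := by
  intro ξ _
  simp [ftH, indAH]

lemma nonempty_of_lt_card_not_regVec {ε : ℝ} (hε : 0 ≤ ε) {A : Finset (Fin n → ZMod p)}
    {H : Submodule (ZMod p) (Fin n → ZMod p)}
    (hbad : ε * Fintype.card (Fin n → ZMod p) < #(univ.filter fun v => ¬ regVec p n ε A H v)) :
    A.Nonempty := by
  rw [nonempty_iff_ne_empty]
  rintro rfl
  simp only [regVec_empty, not_true_eq_false, filter_false, card_empty, Nat.cast_zero] at hbad
  exact hbad.not_ge (by positivity)

end Witnesses

section Increment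

variable {p n : ℕ} [NeZero p] {H H' : Submodule (ZMod p) (Fin n → ZMod p)}

lemma energy_add_le (hp : p.Prime) (hle : H' ≤ H) (A : Set (Fin n → ZMod p))
    (B : Finset (Fin n → ZMod p)) {Δ : ℝ} (hΔ : 0 ≤ Δ)
    (hB : ∀ v ∈ B, ∃ ξ, ¬ H ≤ LinearMap.ker (pairing ξ) ∧ H' ≤ LinearMap.ker (pairing ξ) ∧
      Δ ≤ ‖ftH p n H (indAH p n A H v) ξ‖) :
    energy A H + #B / Fintype.card (Fin n → ZMod p) * Δ ^ 2 ≤ energy A H' := by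
  have hcell : ∀ v, (cellDensity A H v ^ 2 + if v ∈ B then Δ ^ 2 else 0) * Nat.card H
      ≤ ∑ h ∈ finsetOf H, cellDensity A H' (v + h) ^ 2 := by
    intro v
    split_ifs with hv
    · obtain ⟨ξ, hξH, hξH', hΔξ⟩ := hB v hv
      calc _ ≤ (cellDensity A H v ^ 2 + ‖ftH p n H (indAH p n A H v) ξ‖ ^ 2) * Nat.card H := by
            gcongr
        _ ≤ _ := sq_cellDensity_add_sq_norm_ftH_le hp A v ξ hξH
        _ ≤ _ := sum_sq_cellDensity_mono (le_inf hle hξH') inf_le_left A v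
    · simpa using sq_cellDensity_mul_card_le hle A v
  have hsum := sum_le_sum fun v (_ : v ∈ univ) => hcell v
  rw [← sum_mul, sum_sum_finsetOf_add (fun w => cellDensity A H' w ^ 2), nsmul_eq_mul,
    mul_comm, sum_add_distrib, sum_ite_mem, univ_inter, sum_const, nsmul_eq_mul] at hsum
  have hH : (0 : ℝ) < Nat.card H := by exact_mod_cast Nat.card_pos
  rw [energy, energy, div_mul_eq_mul_div, div_eq_inv_mul, ← mul_add]
  gcongr
  exact le_of_mul_le_mul_left hsum hH

lemma exists_le_dens_add_of_not_regular (hp : p.Prime) {ε : ℝ} (hε : 0 ≤ ε)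
    (A : Finset (Fin n → ZMod p)) (H : Submodule (ZMod p) (Fin n → ZMod p))
    (hbad : ε * Fintype.card (Fin n → ZMod p) < #(univ.filter fun v => ¬ regVec p n ε A H v)) :
    ∃ H' ≤ H, Nat.card ((Fin n → ZMod p) ⧸ H')
        ≤ p ^ Nat.card ((Fin n → ZMod p) ⧸ H) * Nat.card ((Fin n → ZMod p) ⧸ H) ∧
      dens p n A H + ε ^ 3 ≤ dens p n A H' := by
  obtain ⟨S, hS, hwit⟩ := exists_witnesses ε A H
  refine ⟨H ⊓ S.inf fun ξ => LinearMap.ker (pairing ξ), inf_le_left,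
    (card_quotient_inf_le hp H S).trans (Nat.mul_le_mul_right _ (Nat.pow_le_pow_right hp.pos hS)),
    ?_⟩
  set N : ℝ := (Fintype.card (Fin n → ZMod p) : ℝ)
  set δ : ℝ := #A / N
  have hN : 0 < N := by positivity
  have hδ : 0 < δ := by have := (nonempty_of_lt_card_not_regVec hε hbad).card_pos; positivity
  have henergy := energy_add_le hp inf_le_left A (univ.filter fun v => ¬ regVec p n ε A H v)
    (Δ := ε * δ) (by positivity) fun v hv => by
      obtain ⟨ξ, hξS, hξH, hξ⟩ := hwit v (mem_filter.1 hv).2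
      exact ⟨ξ, hξH, inf_le_right.trans
        (Finset.inf_le (f := fun ξ => LinearMap.ker (pairing ξ)) hξS), (mul_div_assoc ε _ N ▸ hξ).le⟩
  rw [dens_eq_energy, dens_eq_energy]
  calc energy A H / δ ^ 2 + ε ^ 3 = (energy A H + ε * (ε * δ) ^ 2) / δ ^ 2 := by
        field_simp
    _ ≤ _ := by
        gcongr
        refine le_trans ?_ henergy
        gcongr
        exact (le_div_iff₀ hN).2 hbad.le

end Increment

section Bounds

variable {p n : ℕ} [NeZero p]

lemma cardAH_mono {A B : Set (Fin n → ZMod p)} (hAB : A ⊆ B)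
    (H : Submodule (ZMod p) (Fin n → ZMod p)) (v : Fin n → ZMod p) :
    cardAH p n A H v ≤ cardAH p n B H v :=
  card_le_card (monotone_filter_right _ fun _ _ => And.imp_right (@hAB _))

lemma cardAH_biUnion {ι : Type*} (s : Finset ι) (A : ι → Finset (Fin n → ZMod p))
    (hA : (s : Set ι).PairwiseDisjoint A) (H : Submodule (ZMod p) (Fin n → ZMod p))
    (v : Fin n → ZMod p) :
    cardAH p n ↑(s.biUnion A) H v = ∑ i ∈ s, cardAH p n ↑(A i) H v := by
  rw [cardAH]
  convert card_biUnion (s := s) (t := fun i => univ.filter fun x => x ∈ H ∧ x - v ∈ A i)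
    fun i hi j hj hij => disjoint_filter.2 fun x _ hxi hxj =>
      disjoint_left.1 (hA hi hj hij) hxi.2 hxj.2 using 2
  · ext x
    simp only [mem_filter, mem_univ, true_and, coe_biUnion, mem_coe, mem_biUnion,
      Set.mem_iUnion, exists_prop]
    tauto
  · simp only [cardAH, mem_coe]

lemma sum_sq_cardAH_le {ι : Type*} [Fintype ι] {R A : Finset (Fin n → ZMod p)}
    {Ai : ι → Finset (Fin n → ZMod p)} {H : Submodule (ZMod p) (Fin n → ZMod p)} {v : Fin n → ZMod p}
    {c : ℝ} (hR : (cardAH p n ↑R H v : ℝ) ≤ c) (hAR : A ⊆ R)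
    (hdis : (Set.univ : Set ι).PairwiseDisjoint Ai) (hun : univ.biUnion Ai = A) :
    ∑ i, (cardAH p n ↑(Ai i) H v : ℝ) ^ 2 ≤ c ^ 2 :=
  calc ∑ i, (cardAH p n ↑(Ai i) H v : ℝ) ^ 2 ≤ (∑ i, (cardAH p n ↑(Ai i) H v : ℝ)) ^ 2 :=
        sum_sq_le_sq_sum_of_nonneg fun _ _ => by positivity
    _ = (cardAH p n ↑A H v : ℝ) ^ 2 := by
        rw [← hun, cardAH_biUnion _ _ (by simpa using hdis), Nat.cast_sum]
    _ ≤ c ^ 2 := by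
        gcongr
        exact (Nat.cast_le.2 (cardAH_mono (coe_subset.2 hAR) H v)).trans hR

lemma sum_dens_le {ι : Type*} [Fintype ι] {m : ℕ} (hm : 0 < m) {α : ℝ} (hα : 0 < α)
    (R A : Finset (Fin n → ZMod p)) (Ai : ι → Finset (Fin n → ZMod p))
    (H : Submodule (ZMod p) (Fin n → ZMod p))
    (hR : ∀ v, (cardAH p n ↑R H v : ℝ) ≤ 2 * #R * Nat.card H / Fintype.card (Fin n → ZMod p))
    (hAR : A ⊆ R) (hcard : (#A : ℝ) = α * #R) (hA : A.Nonempty)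
    (hdis : (Set.univ : Set ι).PairwiseDisjoint Ai) (hun : univ.biUnion Ai = A)
    (hsize : ∀ i, m * #(Ai i) = #A) :
    ∑ i, dens p n (Ai i) H ≤ 4 * m ^ 2 / α ^ 2 := by
  set N : ℝ := (Fintype.card (Fin n → ZMod p) : ℝ)
  have hN : 0 < N := by positivity
  have hH : (0 : ℝ) < Nat.card H := by exact_mod_cast Nat.card_pos
  have hA₀ : (0 : ℝ) < #A := by exact_mod_cast hA.card_pos
  have hAi : ∀ i, (#(Ai i) : ℝ) = #A / m := fun i => by
    rw [← hsize i]; push_cast; field_simp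
  calc ∑ i, dens p n (Ai i) H
      = N⁻¹ * ∑ v, (N * m / (Nat.card H * #A)) ^ 2 * ∑ i, (cardAH p n ↑(Ai i) H v : ℝ) ^ 2 := by
        simp only [_root_.dens]
        rw [← mul_sum, sum_comm]
        refine congrArg _ (sum_congr rfl fun v _ => ?_)
        rw [mul_sum]
        refine sum_congr rfl fun i _ => ?_
        rw [hAi]
        field_simp
        rfl
    _ ≤ N⁻¹ * ∑ v : Fin n → ZMod p,
          (N * m / (Nat.card H * #A)) ^ 2 * (2 * #R * Nat.card H / N) ^ 2 := by
        gcongr with v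
        exact sum_sq_cardAH_le (hR v) hAR hdis hun
    _ = 4 * m ^ 2 / α ^ 2 := by
        have hR₀ : (0 : ℝ) < #R := by exact_mod_cast (hA.mono hAR).card_pos
        rw [sum_const, card_univ, nsmul_eq_mul, hcard]
        field_simp
        ring

lemma cardAH_top (A : Finset (Fin n → ZMod p)) (v : Fin n → ZMod p) :
    cardAH p n ↑A ⊤ v = #A :=
  card_nbij' (· - v) (· + v) (fun x hx => by simpa using hx) (fun y hy => by simpa using hy)
    (fun x _ => sub_add_cancel x v) (fun y _ => add_sub_cancel_right y v)

lemma dens_top (A : Finset (Fin n → ZMod p)) (hA : A.Nonempty) :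
    dens p n A ⊤ = 1 := by
  have hN : (0 : ℝ) < Fintype.card (Fin n → ZMod p) := by positivity
  have hA₀ : (0 : ℝ) < #A := by exact_mod_cast hA.card_pos
  simp only [_root_.dens, cardAH_top, ← card_finsetOf, finsetOf_top, card_univ, div_self
    (pow_pos (div_pos hA₀ hN) 2).ne', sum_const, nsmul_eq_mul, mul_one]
  field_simp

end Bounds

lemma tower_pos (p k : ℕ) [NeZero p] : 0 < tower p k := by
  cases k <;> simp [tower, NeZero.pos p]

section Iteration

variable {p n : ℕ} [NeZero p]

lemma pow_mul_le_tower_succ {a k : ℕ} (h : a ≤ tower p k) : p ^ a * a ≤ tower p (k + 1) :=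
  calc p ^ a * a ≤ p ^ a * 2 ^ a := Nat.mul_le_mul_left _ Nat.lt_two_pow_self.le
    _ = (2 * p) ^ a := by rw [mul_pow, mul_comm]
    _ ≤ (2 * p) ^ tower p k := Nat.pow_le_pow_right (by have := NeZero.pos p; omega) h

lemma le_tower_succ {a k : ℕ} (h : a ≤ tower p k) : a ≤ tower p (k + 1) :=
  (Nat.le_mul_of_pos_left a (pow_pos (NeZero.pos p) a)).trans (pow_mul_le_tower_succ h)

lemma inv_mul_card_le_card {H : Submodule (ZMod p) (Fin n → ZMod p)} {t : ℕ} (ht : 0 < t)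
    (h : Nat.card ((Fin n → ZMod p) ⧸ H) ≤ t) :
    (t : ℝ)⁻¹ * Fintype.card (Fin n → ZMod p) ≤ Nat.card H := by
  rw [inv_mul_le_iff₀ (by exact_mod_cast ht), ← Nat.card_eq_fintype_card,
    Submodule.card_eq_card_quotient_mul_card H, mul_comm]
  exact_mod_cast Nat.mul_le_mul_right _ h

lemma exists_regular_or_le_sum_dens (hp : p.Prime) {ε : ℝ} (hε : 0 ≤ ε) {ι : Type*} [Fintype ι]
    (Ai : ι → Finset (Fin n → ZMod p)) (k : ℕ) :
    ∃ H : Submodule (ZMod p) (Fin n → ZMod p), Nat.card ((Fin n → ZMod p) ⧸ H) ≤ tower p k ∧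
      ((∀ i, (#(univ.filter fun v => ¬ regVec p n ε (Ai i) H v) : ℝ)
          ≤ ε * Fintype.card (Fin n → ZMod p)) ∨
        ∑ i, dens p n (Ai i) ⊤ + k * ε ^ 3 ≤ ∑ i, dens p n (Ai i) H) := by
  induction k with
  | zero => exact ⟨⊤, by simpa using Nat.one_le_of_lt (tower_pos p 0), Or.inr (by simp)⟩
  | succ k ih =>
    obtain ⟨H, hidx, hH⟩ := ih
    by_cases hgood : ∀ i, (#(univ.filter fun v => ¬ regVec p n ε (Ai i) H v) : ℝ)
        ≤ ε * Fintype.card (Fin n → ZMod p)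
    · exact ⟨H, le_tower_succ hidx, Or.inl hgood⟩
    obtain ⟨i₀, hi₀⟩ := not_forall.1 hgood
    rw [not_le] at hi₀
    obtain ⟨H', hle, hidx', hinc⟩ := exists_le_dens_add_of_not_regular hp hε (Ai i₀) H hi₀
    refine ⟨H', hidx'.trans (pow_mul_le_tower_succ hidx), Or.inr ?_⟩
    have henergy := hH.resolve_left fun h => (h i₀).not_gt hi₀
    have hrest := sum_le_sum fun i (_ : i ∈ univ.erase i₀) => dens_mono hle (Ai i)
    have hsplit : ∀ K, ∑ i, dens p n (Ai i) K
        = dens p n (Ai i₀) K + ∑ i ∈ univ.erase i₀, dens p n (Ai i) K :=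
      fun K => (add_sum_erase _ _ (mem_univ i₀)).symm
    rw [hsplit H] at henergy
    rw [hsplit H']
    push_cast
    linarith

end Iteration

open Classical in
theorem green_regularity_partition_general {p : ℕ} [NeZero p] (hp : p.Prime)
    (α ε : ℝ) (hα : 0 < α) (hε : 0 < ε)
    (m : ℕ) (hm : 0 < m) :
    ∃ σ : ℝ, 0 < σ ∧
      ∀ (n : ℕ) (R A : Finset (Fin n → ZMod p)) (Ai : Fin m → Finset (Fin n → ZMod p)),
        (∀ (H : Submodule (ZMod p) (Fin n → ZMod p)) (v : Fin n → ZMod p),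
          σ * (Fintype.card (Fin n → ZMod p) : ℝ) ≤ (Nat.card H : ℝ) →
          (cardAH p n (↑R) H v : ℝ)
            ≤ 2 * R.card * (Nat.card H : ℝ) / (Fintype.card (Fin n → ZMod p) : ℝ)) →
        A ⊆ R → (A.card : ℝ) = α * R.card →
        (∀ i j, i ≠ j → Disjoint (Ai i) (Ai j)) →
        (Finset.univ.biUnion Ai = A) →
        (∀ i, m * (Ai i).card = A.card) →
        ∃ H : Submodule (ZMod p) (Fin n → ZMod p),
          Nat.card ((Fin n → ZMod p) ⧸ H) ≤ tower p ⌈4 * m ^ 2 * ε⁻¹ ^ 3 * α⁻¹ ^ 2⌉₊ ∧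
          ∀ i, ((Finset.univ.filter
              (fun v : Fin n → ZMod p => ¬ regVec p n ε (Ai i) H v)).card : ℝ)
            ≤ ε * (Fintype.card (Fin n → ZMod p) : ℝ) := by
  set T := ⌈4 * (m : ℝ) ^ 2 * ε⁻¹ ^ 3 * α⁻¹ ^ 2⌉₊
  refine ⟨(tower p T : ℝ)⁻¹, by have := tower_pos p T; positivity, ?_⟩
  intro n R A Ai hR hAR hcard hdis hun hsize
  obtain ⟨H, hidx, hH⟩ := exists_regular_or_le_sum_dens hp hε.le Ai T
  refine ⟨H, hidx, fun i => ?_⟩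
  by_contra! hbad
  have henergy := hH.resolve_left fun h => (h i).not_gt hbad
  have hA : A.Nonempty :=
    hun ▸ (nonempty_of_lt_card_not_regVec hε.le hbad).mono (subset_biUnion_of_mem Ai (mem_univ i))
  have hAi : ∀ j, (Ai j).Nonempty := fun j =>
    card_pos.1 (Nat.pos_of_mul_pos_left ((hsize j).symm ▸ hA.card_pos))
  have hupper := sum_dens_le hm hα R A Ai H (fun v => hR H v (inv_mul_card_le_card
    (tower_pos p T) hidx)) hAR hcard hA (fun i _ j _ => hdis i j) hun hsize
  simp only [dens_top _ (hAi _), sum_const, card_univ, Fintype.card_fin, nsmul_eq_mul,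
    mul_one] at henergy
  have hT : 4 * (m : ℝ) ^ 2 / α ^ 2 ≤ T * ε ^ 3 := by
    calc 4 * (m : ℝ) ^ 2 / α ^ 2 = 4 * (m : ℝ) ^ 2 * ε⁻¹ ^ 3 * α⁻¹ ^ 2 * ε ^ 3 := by
          field_simp
      _ ≤ T * ε ^ 3 := by gcongr; exact Nat.le_ceil _
  have : (0 : ℝ) < m := by exact_mod_cast hm
  linarith

open Classical in
/-- simultaneous regularity for a partition.  For `α, ε ∈ (0,1)`
and `m ≥ 1` there is `σ = σ(ε,α,m) > 0` such that if `R` is σ-regular, `A ⊆ R`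
has `|A| = α|R|`, and `A = A_1 ∪ ⋯ ∪ A_m` is a partition into `m` sets each of
size `|A|/m`, then there is a subspace `H` of index at most
`W(4m²ε^{-3}α^{-2})` which is ε-regular for every `A_i` simultaneously. -/
theorem green_regularity_partition {p : ℕ} [NeZero p] (hp : p.Prime) (hodd : Odd p)
    (α ε : ℝ) (hα : 0 < α) (hα1 : α < 1) (hε : 0 < ε) (hε1 : ε < 1)
    (m : ℕ) (hm : 0 < m) :
    ∃ σ : ℝ, 0 < σ ∧
      ∀ (n : ℕ) (R A : Finset (Fin n → ZMod p)) (Ai : Fin m → Finset (Fin n → ZMod p)),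
        (∀ (H : Submodule (ZMod p) (Fin n → ZMod p)) (v : Fin n → ZMod p),
          σ * (Fintype.card (Fin n → ZMod p) : ℝ) ≤ (Nat.card H : ℝ) →
          (cardAH p n (↑R) H v : ℝ)
            ≤ 2 * R.card * (Nat.card H : ℝ) / (Fintype.card (Fin n → ZMod p) : ℝ)) →
        A ⊆ R → (A.card : ℝ) = α * R.card →
        (∀ i j, i ≠ j → Disjoint (Ai i) (Ai j)) →
        (Finset.univ.biUnion Ai = A) →
        (∀ i, m * (Ai i).card = A.card) →
        ∃ H : Submodule (ZMod p) (Fin n → ZMod p),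
          Nat.card ((Fin n → ZMod p) ⧸ H) ≤ tower p ⌈4 * m ^ 2 * ε⁻¹ ^ 3 * α⁻¹ ^ 2⌉₊ ∧
          ∀ i, ((Finset.univ.filter
              (fun v : Fin n → ZMod p => ¬ regVec p n ε (Ai i) H v)).card : ℝ)
            ≤ ε * (Fintype.card (Fin n → ZMod p) : ℝ) :=
  green_regularity_partition_general hp α ε hα hε m hm
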